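/- For every integer n ≥ 0, σmex(n) = Σ_{j=0}^{n} pod(j) · D₂*(n − j), where pod(m) is the number of partitions of m in which odd parts are not repeated. -/

import Mathlib

open scoped Classical

/-- The minimal excludant of a partition: the least positive integer not a part. -/
noncomputable def Nat.Partition.mex {n : ℕ} (l : n.Partition) : ℕ :=
  sInf {k : ℕ | 0 < k ∧ k ∉ l.parts}

/-- Sum of minimal excludants over all partitions of `n`. -/
noncomputable def sigmaMex (n : ℕ) : ℕ := ∑ l : Nat.Partition n, l.mex

/-- `sigmaMex` extended to ℤ by zero on negatives. -/
noncomputable def sigmaMexZ (n : ℤ) : ℤ := if 0 ≤ n then sigmaMex n.toNat else 0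

/-- The partition function, extended to ℤ by zero on negatives. -/
noncomputable def partitionsZ (n : ℤ) : ℤ :=
  if 0 ≤ n then Fintype.card (Nat.Partition n.toNat) else 0

/-- `M_k(n)`: partitions of `n` whose mex is `k` with more parts `> k` than parts `< k`. -/
noncomputable def Mfun (k n : ℕ) : ℕ :=
  Nat.card {l : Nat.Partition n //
    l.mex = k ∧ (l.parts.filter fun t => t < k).card < (l.parts.filter fun t => k < t).card}

noncomputable def MfunZ (k : ℕ) (n : ℤ) : ℤ := if 0 ≤ n then Mfun k n.toNat else 0

/-- A multiset of colored parts is a colored partition of `n`. -/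
def IsColoredPartition {c : ℕ} (n : ℕ) (m : Multiset (ℕ × Fin c)) : Prop :=
  (∀ p ∈ m, 0 < p.1) ∧ (m.map Prod.fst).sum = n

/-- Number of partitions of `n` into distinct two-colored parts. -/
noncomputable def D2 (n : ℕ) : ℕ :=
  Nat.card {m : Multiset (ℕ × Fin 2) // IsColoredPartition n m ∧ m.Nodup}

/-- Number of partitions of `n` into distinct parts. -/
def D1 (n : ℕ) : ℕ := (Nat.Partition.distincts n).card

/-- Indicator of triangular numbers. -/
noncomputable def deltaTri (n : ℤ) : ℤ := if ∃ m : ℤ, 2 * n = m * (m + 1) then 1 else 0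

/-- `δ'(n) = (-1)^m` if `n = m(3m-1)` for some integer `m`, else `0`. -/
noncomputable def deltaPent (n : ℤ) : ℤ :=
  ∑' m : ℤ, if n = m * (3 * m - 1) then (if Even m then (1 : ℤ) else -1) else 0

/-- Overpartition: positive parts summing to `n`, overlined (`true`) parts occur at most once
per size. -/
def IsOverpartition (n : ℕ) (m : Multiset (ℕ × Bool)) : Prop :=
  (∀ p ∈ m, 0 < p.1) ∧ (m.map Prod.fst).sum = n ∧ ∀ s : ℕ, m.count (s, true) ≤ 1

/-- Overpartitions of `n` in which the largest part size exceeding `k` appears at least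
`k+1` times. -/
noncomputable def Mbar (k n : ℕ) : ℕ :=
  Nat.card {m : Multiset (ℕ × Bool) // IsOverpartition n m ∧
    ∃ s ∈ m.map Prod.fst, k < s ∧ (∀ t ∈ m.map Prod.fst, k < t → t ≤ s) ∧
      k + 1 ≤ (m.map Prod.fst).count s}

noncomputable def MbarZ (k : ℕ) (n : ℤ) : ℤ := if 0 ≤ n then Mbar k n.toNat else 0

/-- `D₂*(n)`: two-colored distinct partitions with gap-free color-0 parts and even
color-1 parts. -/
noncomputable def D2star (n : ℕ) : ℕ :=
  Nat.card {m : Multiset (ℕ × Fin 2) // IsColoredPartition n m ∧ m.Nodup ∧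
    (∃ j : ℕ, (m.filter fun p => p.2 = 0).map Prod.fst = (Multiset.range j).map (· + 1)) ∧
    ∀ p ∈ m, p.2 = 1 → Even p.1}

/-- Partitions of `n` in which odd parts are not repeated. -/
noncomputable def pod (n : ℕ) : ℕ :=
  Nat.card {l : Nat.Partition n // ∀ t : ℕ, Odd t → l.parts.count t ≤ 1}

/-- `MP_k(n)`: partitions where the largest part exceeding `2k-1` is odd and appears
exactly `k` times, all other odd parts appearing at most once. -/
noncomputable def MPfun (k n : ℕ) : ℕ :=
  Nat.card {l : Nat.Partition n // ∃ s ∈ l.parts, 2 * k - 1 < s ∧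
    (∀ t ∈ l.parts, 2 * k - 1 < t → t ≤ s) ∧ Odd s ∧ l.parts.count s = k ∧
    ∀ t ∈ l.parts, Odd t → t ≠ s → l.parts.count t ≤ 1}

/-- The `r`-gap of a partition: least positive integer appearing fewer than `r` times. -/
noncomputable def Nat.Partition.rgap {n : ℕ} (r : ℕ) (l : n.Partition) : ℕ :=
  sInf {k : ℕ | 0 < k ∧ l.parts.count k < r}

/-- Sum of the `r`-gaps of all partitions of `n`. -/
noncomputable def sigmaMexR (r n : ℕ) : ℕ := ∑ l : Nat.Partition n, l.rgap r

/-- Two-colored partitions: color-0 parts distinct and divisible by `r`; each color-1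
part size occurs at most `2r-1` times. -/
noncomputable def Dtilde (r n : ℕ) : ℕ :=
  Nat.card {m : Multiset (ℕ × Fin 2) // IsColoredPartition n m ∧
    (m.filter fun p => p.2 = 0).Nodup ∧ (∀ p ∈ m, p.2 = 0 → r ∣ p.1) ∧
    ∀ s : ℕ, m.count (s, 1) ≤ 2 * r - 1}

/-- `D₁(x/2)` when `x` is a non-negative even integer, `0` otherwise. -/
noncomputable def D1half (x : ℤ) : ℤ := if 0 ≤ x ∧ 2 ∣ x then D1 (x / 2).toNat else 0

/-- `j = |r| - 1/2 + sign(r)·(-1)^r/2`. -/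
def jOf (r : ℤ) : ℤ :=
  if 0 ≤ r then (if Even r then r else r - 1) else (if Even r then -r - 1 else -r)

/-- `D₃^{(k)}(n)`: three-colored distinct partitions satisfying the conditions of
Proposition 3.2. -/
noncomputable def D3 (k n : ℕ) : ℕ :=
  Nat.card {m : Multiset (ℕ × Fin 3) // IsColoredPartition n m ∧ m.Nodup ∧
    (m.filter fun p => p.2 = 2).card = k ∧
    (1 < k → ∀ a ∈ (m.filter fun p => p.2 = 2).map Prod.fst,
        ∀ b ∈ (m.filter fun p => p.2 = 2).map Prod.fst, b < 2 * a) ∧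
    ∃ a b : ℕ,
      a ∈ (m.filter fun p => (p.2 : ℕ) =
        (jOf (((m.filter fun q => q.2 = 0).card : ℤ) -
          ((m.filter fun q => q.2 = 1).card : ℤ)) % 2).toNat).map Prod.fst ∧
      (∀ t ∈ (m.filter fun p => (p.2 : ℕ) =
        (jOf (((m.filter fun q => q.2 = 0).card : ℤ) -
          ((m.filter fun q => q.2 = 1).card : ℤ)) % 2).toNat).map Prod.fst, t ≤ a) ∧
      b ∈ (m.filter fun p => p.2 = 2).map Prod.fst ∧
      (∀ t ∈ (m.filter fun p => p.2 = 2).map Prod.fst, b ≤ t) ∧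
      (a : ℤ) = jOf (((m.filter fun q => q.2 = 0).card : ℤ) -
          ((m.filter fun q => q.2 = 1).card : ℤ)) + b}


/-!
`k < mex λ` exactly when `λ` contains the staircase `1, 2, …, k`, and removing it shows
`σmex(n) = Σ_k p(n - T_k)` with `T_k = 1 + ⋯ + k`. The colour-0 parts of a `D₂*`-partition form
such a staircase, so likewise `D₂*(m) = Σ_k qe(m - T_k)`, where `qe` counts partitions into
distinct even parts. With `S = Σ_k q^{T_k}` the claim is therefore the coefficient of `q^n` in
`S · P = POD · (S · QE)`, i.e. the identity `P = POD · QE` of generating functions. Comparing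
Euler factors, `POD · QE = D · E` and `O · E = P`, where `D`, `O`, `E` count partitions into
distinct, odd and even parts; Euler's theorem `D = O` closes the chain.
-/

open Finset PowerSeries
open scoped PowerSeries.WithPiTopology

namespace Nat.Partition

section GenFun

variable {R : Type*} [CommSemiring R]

theorem genFun_zero : genFun (fun _ _ ↦ (0 : R)) = 1 := by
  let _ : TopologicalSpace R := ⊥
  have _ : DiscreteTopology R := ⟨rfl⟩
  exact (hasProd_genFun _).unique (by simp)

/-- `genFun f` is a product of Euler factors, the `i`-th one depending only on `f i`. -/
theorem genFun_mul_genFun_eq {f₁ g₁ f₂ g₂ : ℕ → ℕ → R}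
    (h : ∀ i, 0 < i → f₁ i = f₂ i ∧ g₁ i = g₂ i ∨ f₁ i = g₂ i ∧ g₁ i = f₂ i) :
    genFun f₁ * genFun g₁ = genFun f₂ * genFun g₂ := by
  let _ : TopologicalSpace R := ⊥
  have _ : DiscreteTopology R := ⟨rfl⟩
  refine ((hasProd_genFun f₁).mul (hasProd_genFun g₁)).unique ?_
  convert (hasProd_genFun f₂).mul (hasProd_genFun g₂) using 2 with i
  rcases h (i + 1) i.succ_pos with ⟨hf, hg⟩ | ⟨hf, hg⟩
  · rw [hf, hg]
  · rw [hf, hg, mul_comm]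

theorem coeff_genFun_indicator (P : ℕ → ℕ → Prop) [∀ i c, Decidable (P i c)] (n : ℕ) :
    (genFun fun i c ↦ if P i c then (1 : R) else 0).coeff n =
      #{p : n.Partition | ∀ i ∈ p.parts, P i (p.parts.count i)} := by
  simp_rw [coeff_genFun, card_filter, Finsupp.prod, prod_boole]
  simp

end GenFun

def evenDistincts (n : ℕ) : Finset n.Partition := restricted n Even ∩ distincts n

theorem mem_evenDistincts {n : ℕ} {p : n.Partition} :
    p ∈ evenDistincts n ↔ (∀ i ∈ p.parts, Even i) ∧ p.parts.Nodup := by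
  simp [evenDistincts, restricted, distincts]

theorem genFun_one_eq_mk_card :
    genFun (fun _ _ ↦ (1 : ℕ)) = PowerSeries.mk fun n ↦ Fintype.card n.Partition := by
  ext n
  simp [coeff_genFun]

theorem genFun_eq_mk_pod :
    genFun (fun i c ↦ if Odd i → c < 2 then 1 else 0) = PowerSeries.mk pod := by
  ext n
  rw [coeff_mk, coeff_genFun_indicator (fun i c ↦ Odd i → c < 2), Nat.cast_id, pod,
    Nat.card_eq_fintype_card, Fintype.card_subtype]
  congr 1
  ext p
  simp only [mem_filter, mem_univ, true_and]
  refine ⟨fun h t ht ↦ ?_, fun h i _ hi ↦ Nat.lt_succ_of_le (h i hi)⟩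
  by_cases hp : t ∈ p.parts
  · exact Nat.le_of_lt_succ (h t hp ht)
  · simp [Multiset.count_eq_zero_of_notMem hp]

theorem genFun_eq_mk_card_evenDistincts :
    genFun (fun i c ↦ if Even i ∧ c < 2 then 1 else 0) =
      PowerSeries.mk fun n ↦ #(evenDistincts n) := by
  ext n
  rw [coeff_mk, coeff_genFun_indicator (fun i c ↦ Even i ∧ c < 2), Nat.cast_id]
  congr 1
  ext p
  simp only [mem_filter, mem_univ, true_and, mem_evenDistincts, Multiset.nodup_iff_count_le_one]
  refine ⟨fun h ↦ ⟨fun i hi ↦ (h i hi).1, fun i ↦ ?_⟩,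
    fun ⟨he, hc⟩ i hi ↦ ⟨he i hi, Nat.lt_succ_of_le (hc i)⟩⟩
  by_cases hi : i ∈ p.parts
  · exact Nat.le_of_lt_succ (h i hi).2
  · simp [Multiset.count_eq_zero_of_notMem hi]

theorem genFun_distincts_eq_genFun_odds :
    genFun (fun _ c ↦ if c < 2 then (1 : ℕ) else 0) =
      genFun fun i _ ↦ if ¬Even i then 1 else 0 := by
  ext n
  rw [coeff_genFun_indicator (fun _ c ↦ c < 2), coeff_genFun_indicator (fun i _ ↦ ¬Even i),
    Nat.cast_id, Nat.cast_id]
  simpa only [← countRestricted_two, countRestricted, odds, restricted]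
    using (card_odds_eq_card_distincts n).symm

theorem mk_pod_mul_mk_card_evenDistincts :
    PowerSeries.mk pod * (PowerSeries.mk fun n ↦ #(evenDistincts n)) =
      PowerSeries.mk fun n ↦ Fintype.card n.Partition := by
  rw [← genFun_eq_mk_pod, ← genFun_eq_mk_card_evenDistincts, ← genFun_one_eq_mk_card]
  calc _ = genFun (fun _ c ↦ if c < 2 then 1 else 0) *
        genFun fun i _ ↦ if Even i then 1 else 0 := by
        refine genFun_mul_genFun_eq fun i _ ↦ ?_
        by_cases hi : Even i
        · right; constructor <;> funext c <;> simp [hi]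
        · left; constructor <;> funext c <;> simp [hi, Nat.not_even_iff_odd.mp hi]
    _ = genFun (fun i _ ↦ if ¬Even i then 1 else 0) *
        genFun fun i _ ↦ if Even i then 1 else 0 := by
        rw [genFun_distincts_eq_genFun_odds]
    _ = genFun (fun _ _ ↦ 1) * genFun fun _ _ ↦ 0 := by
        refine genFun_mul_genFun_eq fun i _ ↦ ?_
        by_cases hi : Even i
        · right; constructor <;> funext c <;> simp [hi]
        · left; constructor <;> funext c <;> simp [hi]
    _ = _ := by rw [genFun_zero, mul_one]

end Nat.Partition

def staircase (k : ℕ) : Multiset ℕ := (Multiset.range k).map (· + 1)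

theorem mem_staircase {i k : ℕ} : i ∈ staircase k ↔ 0 < i ∧ i ≤ k := by
  simp only [staircase, Multiset.mem_map, Multiset.mem_range]
  exact ⟨by rintro ⟨a, ha, rfl⟩; omega, fun h ↦ ⟨i - 1, by omega, by omega⟩⟩

theorem nodup_staircase (k : ℕ) : (staircase k).Nodup :=
  (Multiset.nodup_range k).map fun _ _ ↦ Nat.succ.inj

theorem card_staircase (k : ℕ) : Multiset.card (staircase k) = k := by
  simp [staircase]

theorem le_sum_staircase (k : ℕ) : k ≤ (staircase k).sum := by
  simpa [card_staircase] using
    Multiset.card_nsmul_le_sum (s := staircase k) (a := 1) fun i hi ↦ (mem_staircase.mp hi).1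

namespace Nat.Partition

variable {n : ℕ}

def partitionWithPartsEquiv {s : Multiset ℕ} (hs : ∀ i ∈ s, 0 < i) (h : s.sum ≤ n) :
    {p : n.Partition // s ≤ p.parts} ≃ (n - s.sum).Partition where
  toFun p := ⟨p.1.parts - s,
    fun hi ↦ p.1.parts_pos (Multiset.mem_of_le (Multiset.sub_le_self _ _) hi), by
      have := congrArg Multiset.sum (tsub_add_cancel_of_le p.2)
      rw [Multiset.sum_add, p.1.parts_sum] at this
      omega⟩
  invFun q := ⟨⟨q.parts + s, fun hi ↦ (Multiset.mem_add.mp hi).elim q.parts_pos (hs _),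
    by rw [Multiset.sum_add, q.parts_sum]; omega⟩, Multiset.le_add_left _ _⟩
  left_inv p := Subtype.ext <| Nat.Partition.ext <| tsub_add_cancel_of_le p.2
  right_inv q := Nat.Partition.ext <| add_tsub_cancel_right _ _

theorem card_filter_le_parts {s : Multiset ℕ} (hs : ∀ i ∈ s, 0 < i) :
    #{p : n.Partition | s ≤ p.parts} =
      if s.sum ≤ n then Fintype.card (n - s.sum).Partition else 0 := by
  split_ifs with h
  · rw [← Fintype.card_subtype, Fintype.card_congr (partitionWithPartsEquiv hs h)]
  · refine Finset.card_eq_zero.mpr (filter_eq_empty_iff.mpr fun p _ hp ↦ h ?_)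
    obtain ⟨u, hu⟩ := Multiset.le_iff_exists_add.mp hp
    have := congrArg Multiset.sum hu
    rw [Multiset.sum_add, p.parts_sum] at this
    omega

theorem mex_le (p : n.Partition) : p.mex ≤ n + 1 :=
  Nat.sInf_le ⟨n.succ_pos, fun h ↦ by have := le_of_mem_parts h; omega⟩

theorem lt_mex_iff (p : n.Partition) {k : ℕ} : k < p.mex ↔ staircase k ≤ p.parts := by
  rw [Multiset.le_iff_subset (nodup_staircase k)]
  constructor
  · intro hk i hi
    by_contra hni
    have : p.mex ≤ i := Nat.sInf_le ⟨(mem_staircase.mp hi).1, hni⟩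
    have := (mem_staircase.mp hi).2
    omega
  · intro hsub
    by_contra hk
    obtain ⟨hpos, hnot⟩ := Nat.sInf_mem (⟨n + 1, n.succ_pos, fun h ↦ by
      have := le_of_mem_parts h; omega⟩ : {k | 0 < k ∧ k ∉ p.parts}.Nonempty)
    exact hnot (hsub (mem_staircase.mpr ⟨hpos, not_lt.mp hk⟩))

def subtypeMultisetEquiv (t M : ℕ) (Q : Multiset ℕ → Prop) :
    {ν : Multiset ℕ // (∀ x ∈ ν, 0 < x) ∧ t + ν.sum = M ∧ Q ν} ≃
      {p : (M - t).Partition // t ≤ M ∧ Q p.parts} where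
  toFun ν := ⟨⟨ν.1, ν.2.1 _, by omega⟩, by omega, ν.2.2.2⟩
  invFun p := ⟨p.1.parts, fun _ ↦ p.1.parts_pos, by have := p.1.parts_sum; omega, p.2.2⟩
  left_inv _ := rfl
  right_inv _ := rfl

end Nat.Partition

theorem sigmaMex_eq_sum (n : ℕ) :
    sigmaMex n = ∑ k ∈ range (n + 1), #{p : n.Partition | staircase k ≤ p.parts} := by
  simp_rw [card_filter]
  rw [sigmaMex, sum_comm]
  refine sum_congr rfl fun p _ ↦ ?_
  simp_rw [← Nat.Partition.lt_mex_iff, ← card_filter]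
  have : {k ∈ range (n + 1) | k < p.mex} = range p.mex := by
    ext k
    have := p.mex_le
    simp only [mem_filter, mem_range]
    omega
  rw [this, card_range]

namespace Multiset

variable {α : Type*}

def colorSplitEquiv : Multiset (α × Fin 2) ≃ Multiset α × Multiset α where
  toFun m := ((m.filter fun p ↦ p.2 = 0).map Prod.fst, (m.filter fun p ↦ p.2 = 1).map Prod.fst)
  invFun ab := ab.1.map (·, 0) + ab.2.map (·, 1)
  left_inv m := by
    have (c : Fin 2) : ((m.filter fun p ↦ p.2 = c).map Prod.fst).map (·, c) =
        m.filter fun p ↦ p.2 = c := by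
      rw [map_map]
      conv_rhs => rw [← map_id (m.filter _)]
      exact map_congr rfl fun p hp ↦ by rw [← (mem_filter.mp hp).2]; rfl
    dsimp only
    rw [this, this]
    conv_rhs => rw [← filter_add_not (fun p : α × Fin 2 ↦ p.2 = 0) m]
    congr 1
    exact filter_congr fun ⟨_, c⟩ _ ↦ by fin_cases c <;> simp
  right_inv ab := by
    simp [filter_add, filter_map, map_map]

end Multiset

theorem D2star_cond_colorSplitEquiv_symm_iff (M : ℕ) (a b : Multiset ℕ) :
    (IsColoredPartition M (Multiset.colorSplitEquiv.symm (a, b)) ∧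
      (Multiset.colorSplitEquiv.symm (a, b)).Nodup ∧
      (∃ j : ℕ, ((Multiset.colorSplitEquiv.symm (a, b)).filter fun p => p.2 = 0).map Prod.fst =
        (Multiset.range j).map (· + 1)) ∧
      ∀ p ∈ Multiset.colorSplitEquiv.symm (a, b), p.2 = 1 → Even p.1) ↔
    (∃ j, a = staircase j) ∧ (∀ x ∈ b, 0 < x) ∧ a.sum + b.sum = M ∧
      (∀ x ∈ b, Even x) ∧ b.Nodup := by
  set m := Multiset.colorSplitEquiv.symm (a, b)
  have ha : (m.filter fun p => p.2 = 0).map Prod.fst = a :=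
    congrArg Prod.fst (Multiset.colorSplitEquiv.apply_symm_apply (a, b))
  have hpos : (∀ p ∈ m, 0 < p.1) ↔ (∀ x ∈ a, 0 < x) ∧ ∀ x ∈ b, 0 < x := by
    simp [m, Multiset.colorSplitEquiv, or_imp, forall_and]
  have hsum : (m.map Prod.fst).sum = a.sum + b.sum := by
    simp [m, Multiset.colorSplitEquiv, Multiset.map_map]
  have hnd : m.Nodup ↔ a.Nodup ∧ b.Nodup := by
    simp [m, Multiset.colorSplitEquiv, Multiset.nodup_add, Multiset.disjoint_map_map,
      Multiset.nodup_map_iff_of_injective (Prod.mk_left_injective _)]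
  have hev : (∀ p ∈ m, p.2 = 1 → Even p.1) ↔ ∀ x ∈ b, Even x := by
    simp [m, Multiset.colorSplitEquiv]
  rw [IsColoredPartition, hpos, hsum, hnd, hev, ha]
  constructor
  · rintro ⟨⟨⟨-, hb⟩, hs⟩, ⟨-, hn⟩, ⟨j, rfl⟩, he⟩
    exact ⟨⟨j, rfl⟩, hb, hs, he, hn⟩
  · rintro ⟨⟨j, rfl⟩, hb, hs, he, hn⟩
    exact ⟨⟨⟨fun x hx ↦ (mem_staircase.mp hx).1, hb⟩, hs⟩, ⟨nodup_staircase j, hn⟩, ⟨j, rfl⟩, he⟩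

def staircaseSplitEquiv (M : ℕ) (Q : Multiset ℕ → Prop) :
    {ab : Multiset ℕ × Multiset ℕ //
      (∃ j, ab.1 = staircase j) ∧ (∀ x ∈ ab.2, 0 < x) ∧ ab.1.sum + ab.2.sum = M ∧ Q ab.2} ≃
    Σ k : Fin (M + 1),
      {ν : Multiset ℕ // (∀ x ∈ ν, 0 < x) ∧ (staircase k).sum + ν.sum = M ∧ Q ν} where
  toFun ab := ⟨⟨Multiset.card ab.1.1, by
      obtain ⟨⟨j, hj⟩, -, hsum, -⟩ := ab.2
      have := le_sum_staircase j
      rw [hj] at hsum ⊢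
      rw [card_staircase]
      omega⟩, ⟨ab.1.2, by
      obtain ⟨⟨j, hj⟩, hpos, hsum, hQ⟩ := ab.2
      refine ⟨hpos, ?_, hQ⟩
      change (staircase (Multiset.card ab.1.1)).sum + _ = M
      rwa [hj, card_staircase, ← hj]⟩⟩
  invFun kν := ⟨(staircase kν.1, kν.2.1), ⟨kν.1, rfl⟩, kν.2.2⟩
  left_inv ab := by
    obtain ⟨⟨a, b⟩, ⟨j, hj : a = staircase j⟩, -⟩ := ab
    refine Subtype.ext (Prod.ext ?_ rfl)
    change staircase (Multiset.card a) = a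
    rw [hj, card_staircase]
  right_inv kν := Sigma.subtype_ext (Fin.ext (card_staircase _)) rfl

theorem D2star_eq_sum (M : ℕ) :
    D2star M = ∑ k ∈ range (M + 1), if (staircase k).sum ≤ M then
      #(Nat.Partition.evenDistincts (M - (staircase k).sum)) else 0 := by
  rw [D2star, ← Nat.card_congr (Multiset.colorSplitEquiv.symm.subtypeEquiv fun ab ↦
      (D2star_cond_colorSplitEquiv_symm_iff M ab.1 ab.2).symm),
    Nat.card_congr ((staircaseSplitEquiv M fun ν ↦ (∀ x ∈ ν, Even x) ∧ ν.Nodup).trans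
      (Equiv.sigmaCongrRight fun k ↦ Nat.Partition.subtypeMultisetEquiv _ M _)),
    Nat.card_eq_fintype_card, Fintype.card_sigma,
    Fin.sum_univ_eq_sum_range (fun k ↦ Fintype.card {p : (M - (staircase k).sum).Partition //
      (staircase k).sum ≤ M ∧ ((∀ x ∈ p.parts, Even x) ∧ p.parts.Nodup)})]
  refine sum_congr rfl fun k _ ↦ ?_
  split_ifs with h
  · simp only [h, true_and, Fintype.card_subtype, ← Nat.Partition.mem_evenDistincts,
      filter_mem_eq_inter, univ_inter]
  · simp [h]

noncomputable def staircaseSeries : ℕ⟦X⟧ := ∑' k, X ^ (staircase k).sum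

theorem coeff_staircaseSeries_mul (g : ℕ → ℕ) (n : ℕ) :
    coeff n (staircaseSeries * PowerSeries.mk g) =
      ∑ k ∈ range (n + 1), if (staircase k).sum ≤ n then g (n - (staircase k).sum) else 0 := by
  have hsum : Summable fun k ↦ (X : ℕ⟦X⟧) ^ (staircase k).sum := by
    refine WithPiTopology.summable_of_tendsto_order_atTop_nhds_top ℕ ?_
    simp_rw [order_X_pow]
    refine ENat.tendsto_nhds_top_iff_natCast_lt.mpr fun m ↦
      Filter.eventually_atTop.mpr ⟨m + 1, fun k hk ↦ ?_⟩
    have := le_sum_staircase k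
    exact_mod_cast (by omega : m < (staircase k).sum)
  rw [staircaseSeries, ← hsum.tsum_mul_right,
    (hsum.mul_right _).map_tsum _ (WithPiTopology.continuous_coeff _ _)]
  simp_rw [coeff_X_pow_mul', coeff_mk]
  refine tsum_eq_sum fun k hk ↦ ?_
  have := le_sum_staircase k
  rw [mem_range] at hk
  rw [if_neg (by omega)]

theorem mk_sigmaMex :
    PowerSeries.mk sigmaMex =
      staircaseSeries * PowerSeries.mk fun n ↦ Fintype.card n.Partition := by
  ext n
  rw [coeff_mk, coeff_staircaseSeries_mul, sigmaMex_eq_sum]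
  exact sum_congr rfl fun k _ ↦
    Nat.Partition.card_filter_le_parts fun i hi ↦ (mem_staircase.mp hi).1

theorem mk_D2star :
    PowerSeries.mk D2star =
      staircaseSeries * PowerSeries.mk fun n ↦ #(Nat.Partition.evenDistincts n) := by
  ext n
  rw [coeff_mk, coeff_staircaseSeries_mul, D2star_eq_sum]

theorem stmt12 (n : ℕ) :
    sigmaMex n = ∑ j ∈ Finset.range (n + 1), pod j * D2star (n - j) := by
  have h : PowerSeries.mk sigmaMex = PowerSeries.mk pod * PowerSeries.mk D2star := by
    rw [mk_sigmaMex, mk_D2star, ← Nat.Partition.mk_pod_mul_mk_card_evenDistincts, mul_left_comm]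
  simpa [coeff_mul, Finset.Nat.sum_antidiagonal_eq_sum_range_succ_mk] using congrArg (coeff n) h
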